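/- arXiv:1812.09739 — 2 statements merged into one kernel-verified Lean document; each statement's English description precedes it below -/
import Mathlib

section
/- Let i ≥ 1 and 1 ≤ s ≤ q−1. Then for any integers μ_1,…,μ_s ≥ 0 and any 0 ≤ j_1,…,j_s ≤ i, the following identity holds in K = 𝔽_q(θ): Σ_{a ∈ A_{i+}} ( ∂_θ^{j_1}(a)^{q^{μ_1}} ··· ∂_θ^{j_s}(a)^{q^{μ_s}} ) / a = (1/L_i) · Π_{r=1}^{s} (−1)^{i−j_r} · e_{i,i−j_r}( θ − θ^{q^{μ_r}}, θ^q − θ^{q^{μ_r}}, …, θ^{q^{i−1}} − θ^{q^{μ_r}} ). -/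
open Polynomial Finset

noncomputable section

/-- Elementary symmetric polynomial of degree `j` in the family `v` indexed by the finite set `s`. -/
def esymF {R : Type*} [CommRing R] {α : Type*} [DecidableEq α] (s : Finset α) (v : α → R) (j : ℕ) : R :=
  ∑ S ∈ s.powersetCard j, ∏ m ∈ S, v m

variable (F : Type*) [Field F] [Fintype F]

local notation "q" => Fintype.card F

/-- `L_i = (−1)^i [i][i−1]···[1] ∈ A = 𝔽_q[θ]` where `[n] = θ^{q^n} − θ` (and `L_0 = 1`);
here `A` is realized as `Polynomial F` with `θ = X`. -/
def Lp (i : ℕ) : Polynomial F :=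
  (-1 : Polynomial F) ^ i * ∏ n ∈ Icc 1 i, ((X : Polynomial F) ^ q ^ n - X)

/-- `θ` as an element of `K = 𝔽_q(θ)`, realized as `RatFunc F`. -/
def θK : RatFunc F := algebraMap (Polynomial F) (RatFunc F) X

/-!
Write `t_ν = θ^{q^ν}` and let `M ⊂ K` be the monic polynomials of degree `i`. Interpolating a
monic `a` at `t_0, …, t_{i-1}` gives `a = ∏ (X - t_ν) + Σ a(t_ν) ℓ_ν`, and `a(t_ν) = a^{q^ν}`.
Applying a `K`-linear functional `Λ` (such as `f ↦ (∂^j f)(t_μ)`, which sends `a` to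
`(∂^j a)^{q^μ}`) shows that `Λ(a)` is the value at `a` of an `𝔽_q`-linear polynomial plus a
constant, of degree `≤ q^{i-1}`. For `Λ = eval t_i` this exhibits the vanishing polynomial of `M`
as `X^{q^i}` minus such a polynomial, so its derivative is a constant. Lagrange interpolation at
the `q^i` points of `M`, evaluated at `0`, then gives `Σ_{a ∈ M} g(a)/a = g(0)/L_i` whenever
`deg g < q^i`; a product of `s ≤ q - 1` of the polynomials above has degree `≤ s q^{i-1} < q^i`,
and its value at `0` is read off from the coefficients of `∏ (X - t_ν)` by Vieta.
-/

open Lagrange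

section Interpolation

variable {L ι : Type*} [Field L] [DecidableEq ι] {s : Finset ι} {v : ι → L}

theorem Polynomial.Monic.eq_nodal_add_interpolate {f : L[X]} (hf : f.Monic)
    (hvs : Set.InjOn v s) (hdeg : f.natDegree = #s) :
    f = nodal s v + interpolate s v (fun i => f.eval (v i)) := by
  have hf_deg : f.degree = #s := by rw [degree_eq_natDegree hf.ne_zero, hdeg]
  have hlt : (f - nodal s v).degree < #s :=
    hf_deg ▸ degree_sub_lt_left (by rw [hf_deg, degree_nodal]) hf.ne_zero
      (by rw [hf.leadingCoeff, nodal_monic.leadingCoeff])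
  rw [← sub_eq_iff_eq_add', eq_interpolate hvs hlt]
  exact interpolate_eq_of_values_eq_on _ _ fun i hi => by
    rw [eval_sub, eval_nodal_at_node hi, sub_zero]

theorem Lagrange.eval_zero_eq_mul_sum_eval_div (hvs : Set.InjOn v s) (hv0 : ∀ i ∈ s, v i ≠ 0)
    {D : L} (hD : ∀ i ∈ s, (nodal s v).derivative.eval (v i) = D) {g : L[X]}
    (hg : g.degree < #s) :
    g.eval 0 = -(nodal s v).eval 0 / D * ∑ i ∈ s, g.eval (v i) / v i := by
  conv_lhs => rw [eq_interpolate hvs hg]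
  rw [eval_interpolate_not_at_node _ fun i hi => (hv0 i hi).symm, mul_sum, mul_sum]
  refine sum_congr rfl fun i hi => ?_
  rw [nodalWeight_eq_eval_derivative_nodal hi, hD i hi]
  field_simp
  ring

end Interpolation

theorem Lagrange.eval_hasseDeriv_nodal {R ι : Type*} [CommRing R] [DecidableEq ι] (s : Finset ι)
    (v : ι → R) (x : R) {j : ℕ} (hj : j ≤ #s) :
    (hasseDeriv j (nodal s v)).eval x = (-1) ^ (#s - j) * esymF s (fun i => v i - x) (#s - j) := by
  have htaylor : taylor x (nodal s v) = ∏ i ∈ s, (X + C (x - v i)) := by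
    rw [nodal, taylor_apply, Polynomial.prod_comp]
    refine prod_congr rfl fun i _ => ?_
    rw [sub_comp, X_comp, C_comp, C_sub]
    ring
  rw [← taylor_coeff, htaylor, prod_X_add_C_coeff s _ hj, esymF, mul_sum]
  refine sum_congr rfl fun S hS => ?_
  rw [← (mem_powersetCard.1 hS).2, ← prod_const, ← prod_mul_distrib]
  exact prod_congr rfl fun _ _ => by ring

theorem Polynomial.hasseDeriv_map {R S : Type*} [Semiring R] [Semiring S] (f : R →+* S) (j : ℕ)
    (a : R[X]) : hasseDeriv j (a.map f) = (hasseDeriv j a).map f := by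
  ext n
  simp only [hasseDeriv_coeff, coeff_map, map_mul, map_natCast]

theorem FiniteField.aeval_pow_card_pow {F R : Type*} [Field F] [Fintype F] [CommSemiring R]
    [Algebra F R] (x : R) (a : F[X]) (n : ℕ) :
    aeval (x ^ Fintype.card F ^ n) a = aeval x a ^ Fintype.card F ^ n := by
  induction n with
  | zero => simp
  | succ n ih =>
    rw [pow_succ, pow_mul, ← expand_aeval, FiniteField.expand_card, map_pow, ih, pow_mul]

section MonicsOfDegree

def Polynomial.monicsOfDegree (n : ℕ) : Finset F[X] :=
  univ.map ⟨fun c => X ^ n + ((degreeLTEquiv F n).symm c : F[X]),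
    (add_right_injective _).comp (Subtype.val_injective.comp (degreeLTEquiv F n).symm.injective)⟩

theorem Polynomial.card_monicsOfDegree (n : ℕ) : #(monicsOfDegree F n) = q ^ n := by
  rw [monicsOfDegree, card_map, card_univ, Fintype.card_fun, Fintype.card_fin]

variable {F} in
theorem Polynomial.mem_monicsOfDegree {n : ℕ} {a : F[X]} :
    a ∈ monicsOfDegree F n ↔ a.Monic ∧ a.natDegree = n := by
  simp only [monicsOfDegree, mem_map, mem_univ, true_and]
  constructor
  · rintro ⟨c, rfl⟩
    dsimp only [Function.Embedding.coeFn_mk]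
    have hlt := mem_degreeLT.1 ((degreeLTEquiv F n).symm c).2
    exact ⟨monic_X_pow_add hlt,
      by rw [natDegree_add_eq_left_of_degree_lt (by rwa [degree_X_pow]), natDegree_X_pow]⟩
  · rintro ⟨ha, rfl⟩
    have hlt : (a - X ^ a.natDegree).degree < (a.natDegree : WithBot ℕ) := by
      simpa only [degree_eq_natDegree ha.ne_zero] using degree_sub_lt_left
        (by rw [degree_X_pow, degree_eq_natDegree ha.ne_zero]) ha.ne_zero
        (by rw [ha.leadingCoeff, leadingCoeff_X_pow])
    exact ⟨degreeLTEquiv F _ ⟨_, mem_degreeLT.2 hlt⟩, by simp⟩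

end MonicsOfDegree

namespace HasseDerivPowerSum

local notation "K" => RatFunc F
local notation "φ" => algebraMap F[X] (RatFunc F)

def node (ν : ℕ) : K := θK F ^ q ^ ν

theorem node_injective : Function.Injective (node F) := by
  intro a b h
  have hX : (X : F[X]) ^ q ^ a = X ^ q ^ b :=
    RatFunc.algebraMap_injective F (by simpa only [node, θK, map_pow] using h)
  exact Nat.pow_right_injective (Fintype.one_lt_card (α := F))
    (by simpa only [natDegree_X_pow] using congrArg natDegree hX)

theorem natCast_card_eq_zero : (q : K) = 0 := by
  rw [← map_natCast (algebraMap F K), FiniteField.cast_card_eq_zero, map_zero]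

theorem eval_map_node (a : F[X]) (ν : ℕ) :
    (a.map (algebraMap F K)).eval (node F ν) = φ a ^ q ^ ν := by
  rw [eval_map_algebraMap, node, θK, FiniteField.aeval_pow_card_pow, aeval_algebraMap_apply,
    aeval_X_left_apply]

/-- For `a` monic of degree `i`, `Λ a` is the value of this polynomial at `a`: interpolate `a`
at the nodes `θ^{q^ν}`, `ν < i`, where it takes the values `a^{q^ν}`. -/
def linearizedOf (i : ℕ) (Λ : K[X] →ₗ[K] K) : K[X] :=
  C (Λ (nodal (range i) (node F))) +
    ∑ ν ∈ range i, C (Λ (Lagrange.basis (range i) (node F) ν)) * X ^ q ^ ν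

variable {F}

theorem eval_linearizedOf {i : ℕ} (Λ : K[X] →ₗ[K] K) {a : F[X]} (ha : a ∈ monicsOfDegree F i) :
    (linearizedOf F i Λ).eval (φ a) = Λ (a.map (algebraMap F K)) := by
  obtain ⟨hmonic, hdeg⟩ := mem_monicsOfDegree.1 ha
  rw [(hmonic.map _).eq_nodal_add_interpolate (node_injective F).injOn
    (by rw [natDegree_map, hdeg, card_range]), map_add, interpolate_apply, map_sum, linearizedOf,
    eval_add, eval_C, eval_finsetSum]
  congr 1
  refine sum_congr rfl fun ν _ => ?_
  rw [eval_map_node, eval_mul, eval_C, eval_pow, eval_X, ← smul_eq_C_mul, map_smul, smul_eq_mul,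
    mul_comm]

theorem eval_zero_linearizedOf (i : ℕ) (Λ : K[X] →ₗ[K] K) :
    (linearizedOf F i Λ).eval 0 = Λ (nodal (range i) (node F)) := by
  simp [linearizedOf, eval_finsetSum, zero_pow (pow_ne_zero _ Fintype.card_ne_zero)]

theorem natDegree_linearizedOf_le {i : ℕ} (hi : 1 ≤ i) (Λ : K[X] →ₗ[K] K) :
    (linearizedOf F i Λ).natDegree ≤ q ^ (i - 1) := by
  refine (natDegree_add_le _ _).trans (max_le (by simp) (natDegree_sum_le_of_forall_le _ _ ?_))
  intro ν hν
  refine (natDegree_C_mul_X_pow_le _ _).trans (Nat.pow_le_pow_right Fintype.card_pos ?_)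
  have := mem_range.1 hν
  omega

theorem degree_prod_linearizedOf_lt {i s : ℕ} (hi : 1 ≤ i) (hs : s ≤ q - 1)
    (Λ : Fin s → K[X] →ₗ[K] K) : (∏ r, linearizedOf F i (Λ r)).degree < ↑(q ^ i) := by
  have hq := Fintype.one_lt_card (α := F)
  calc (∏ r, linearizedOf F i (Λ r)).degree ≤ ↑(s * q ^ (i - 1)) := by
        refine degree_le_of_natDegree_le ((natDegree_prod_le _ _).trans ?_)
        exact (sum_le_sum fun r _ => natDegree_linearizedOf_le hi (Λ r)).trans (by simp)
    _ ≤ ↑((q - 1) * q ^ (i - 1)) := WithBot.coe_le_coe.2 (Nat.mul_le_mul_right _ hs)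
    _ < ↑(q * q ^ (i - 1)) := WithBot.coe_lt_coe.2 (by gcongr; omega)
    _ = ↑(q ^ i) := by rw [← pow_succ', Nat.sub_add_cancel hi]

theorem derivative_linearizedOf {i : ℕ} (hi : 1 ≤ i) (Λ : K[X] →ₗ[K] K) :
    derivative (linearizedOf F i Λ) = C (Λ (Lagrange.basis (range i) (node F) 0)) := by
  rw [linearizedOf, derivative_add, derivative_C, zero_add, derivative_sum,
    ← sum_erase_add _ _ (mem_range.2 hi), sum_eq_zero fun ν hν => ?_, zero_add, pow_zero, pow_one,
    derivative_C_mul_X]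
  rw [derivative_C_mul_X_pow, Nat.cast_pow, natCast_card_eq_zero,
    zero_pow (ne_of_mem_erase hν), mul_zero, C_0, zero_mul]

theorem eval_linearizedOf_hasseDeriv {i : ℕ} (j μ : ℕ) {a : F[X]}
    (ha : a ∈ monicsOfDegree F i) :
    (linearizedOf F i ((leval (node F μ)).comp (hasseDeriv j))).eval (φ a)
      = φ (hasseDeriv j a) ^ q ^ μ := by
  rw [eval_linearizedOf _ ha, LinearMap.comp_apply, leval_apply, hasseDeriv_map, eval_map_node]

theorem nodal_monicsOfDegree {i : ℕ} (hi : 1 ≤ i) :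
    nodal (monicsOfDegree F i) φ = X ^ q ^ i - linearizedOf F i (leval (node F i)) := by
  classical
  have hlt : (linearizedOf F i (leval (node F i))).degree < ((X : K[X]) ^ q ^ i).degree := by
    rw [degree_X_pow]
    exact (degree_le_of_natDegree_le (natDegree_linearizedOf_le hi _)).trans_lt
      (WithBot.coe_lt_coe.2 (Nat.pow_lt_pow_right Fintype.one_lt_card (by omega)))
  refine eq_of_degree_le_of_eval_index_eq _ (RatFunc.algebraMap_injective F).injOn
    (by rw [degree_nodal])
    (by rw [degree_nodal, degree_sub_eq_left_of_degree_lt hlt, degree_X_pow, card_monicsOfDegree])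
    (by rw [nodal_monic.leadingCoeff, leadingCoeff_sub_of_degree_lt hlt, leadingCoeff_X_pow])
    fun a ha => ?_
  rw [eval_nodal_at_node ha, eval_sub, eval_pow, eval_X, eval_linearizedOf _ ha, leval_apply,
    eval_map_node, sub_self]

theorem algebraMap_Lp {i : ℕ} (hi : 1 ≤ i) :
    φ (Lp F i) = -(node F i - node F 0) / nodalWeight (range i) (node F) 0 := by
  obtain ⟨n, rfl⟩ : ∃ n, i = n + 1 := ⟨i - 1, by omega⟩
  have hIcc : Icc 1 (n + 1) = insert (n + 1) ((range (n + 1)).erase 0) := by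
    ext; simp only [mem_Icc, mem_insert, mem_erase, mem_range]; omega
  have hfactor : ∀ m, φ ((X : F[X]) ^ q ^ m - X) = node F m - node F 0 := fun m => by
    simp [node, θK]
  have hneg : ∏ ν ∈ (range (n + 1)).erase 0, (node F ν - node F 0)
      = (-1) ^ n * ∏ ν ∈ (range (n + 1)).erase 0, (node F 0 - node F ν) := by
    have hcard : #((range (n + 1)).erase 0) = n := by simp
    calc _ = ∏ ν ∈ (range (n + 1)).erase 0, -(node F 0 - node F ν) :=
          prod_congr rfl fun ν _ => (neg_sub _ _).symm
      _ = _ := by rw [prod_neg, hcard]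
  have hsq : ((-1 : K) ^ n) * (-1) ^ n = 1 := by rw [← mul_pow, neg_one_mul, neg_neg, one_pow]
  rw [nodalWeight, prod_inv_distrib, div_inv_eq_mul, Lp, map_mul, map_pow, map_neg, map_one,
    map_prod, hIcc, prod_insert (by simp)]
  simp only [hfactor]
  rw [hneg, pow_succ]
  linear_combination
    (-(node F (n + 1) - node F 0) * ∏ ν ∈ (range (n + 1)).erase 0, (node F 0 - node F ν)) * hsq

theorem sum_eval_div_monicsOfDegree {i : ℕ} (hi : 1 ≤ i) {g : K[X]} (hg : g.degree < ↑(q ^ i)) :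
    ∑ a ∈ monicsOfDegree F i, g.eval (φ a) / φ a = (φ (Lp F i))⁻¹ * g.eval 0 := by
  classical
  have hW := nodal_monicsOfDegree (F := F) hi
  set W := nodal (monicsOfDegree F i) φ
  set Q := nodal (range i) (node F)
  set b := (Lagrange.basis (range i) (node F) 0).eval (node F i)
  have hD : ∀ a ∈ monicsOfDegree F i, W.derivative.eval (φ a) = -b := fun a _ => by
    rw [hW, derivative_sub, derivative_X_pow, Nat.cast_pow,
      natCast_card_eq_zero, zero_pow (by omega), C_0, zero_mul, derivative_linearizedOf hi,
      zero_sub, eval_neg, eval_C, leval_apply]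
  have hW0 : W.eval 0 = -Q.eval (node F i) := by
    rw [hW, eval_sub, eval_zero_linearizedOf, leval_apply, eval_pow, eval_X,
      zero_pow (pow_ne_zero _ Fintype.card_ne_zero), zero_sub]
  have hi0 : node F i ≠ node F 0 := (node_injective F).ne (by omega)
  have hw : nodalWeight (range i) (node F) 0 ≠ 0 :=
    nodalWeight_ne_zero (node_injective F).injOn (mem_range.2 hi)
  have hQ : Q.eval (node F i) ≠ 0 :=
    eval_nodal_not_at_node fun ν hν => (node_injective F).ne (by simp at hν; omega)
  have hb : b = Q.eval (node F i) * (nodalWeight (range i) (node F) 0 * (node F i - node F 0)⁻¹) :=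
    eval_basis_not_at_node (mem_range.2 hi) hi0
  have hLp : φ (Lp F i) = -W.eval 0 / -b := by
    rw [algebraMap_Lp hi, hW0, hb]
    field_simp [sub_ne_zero.2 hi0, hQ]
  have hLp0 : φ (Lp F i) ≠ 0 := by
    rw [algebraMap_Lp hi]
    exact div_ne_zero (neg_ne_zero.2 (sub_ne_zero.2 hi0)) hw
  have hφ : ∀ a ∈ monicsOfDegree F i, φ a ≠ 0 := fun a ha =>
    (map_ne_zero_iff _ (RatFunc.algebraMap_injective F)).2 (mem_monicsOfDegree.1 ha).1.ne_zero
  rw [eval_zero_eq_mul_sum_eval_div (RatFunc.algebraMap_injective F).injOn hφ hD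
    (by rwa [card_monicsOfDegree]), ← hLp, inv_mul_cancel_left₀ hLp0]

end HasseDerivPowerSum

open HasseDerivPowerSum in
theorem stmt9 (i : ℕ) (hi : 1 ≤ i) (s : ℕ) (hs2 : s ≤ q - 1)
    (μ : Fin s → ℕ) (j : Fin s → ℕ) (hj : ∀ r, j r ≤ i) :
    (∑ᶠ a ∈ {a : Polynomial F | a.Monic ∧ a.natDegree = i},
        (∏ r : Fin s,
            algebraMap (Polynomial F) (RatFunc F) (hasseDeriv (j r) a) ^ q ^ μ r)
          / algebraMap (Polynomial F) (RatFunc F) a)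
      = (algebraMap (Polynomial F) (RatFunc F) (Lp F i))⁻¹
          * ∏ r : Fin s,
              (-1 : RatFunc F) ^ (i - j r)
                * esymF (range i) (fun ν => θK F ^ q ^ ν - θK F ^ q ^ μ r) (i - j r) := by
  set G := ∏ r : Fin s, linearizedOf F i ((leval (node F (μ r))).comp (hasseDeriv (j r)))
  have hset : {a : F[X] | a.Monic ∧ a.natDegree = i} = ↑(monicsOfDegree F i) :=
    Set.ext fun _ => mem_monicsOfDegree.symm
  rw [hset, finsum_mem_coe_finset]
  calc _ = ∑ a ∈ monicsOfDegree F i,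
        G.eval (algebraMap F[X] (RatFunc F) a) / algebraMap F[X] (RatFunc F) a :=
        sum_congr rfl fun a ha => by simp only [G, eval_prod, eval_linearizedOf_hasseDeriv _ _ ha]
    _ = (algebraMap F[X] (RatFunc F) (Lp F i))⁻¹ * G.eval 0 :=
        sum_eval_div_monicsOfDegree hi (degree_prod_linearizedOf_lt hi hs2 _)
    _ = _ := by
        rw [eval_prod]
        refine congrArg _ (prod_congr rfl fun r _ => ?_)
        rw [eval_zero_linearizedOf, LinearMap.comp_apply, leval_apply,
          eval_hasseDeriv_nodal _ _ _ (by rw [card_range]; exact hj r), card_range]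
        rfl

end
end

section
/- Let i ≥ 1, 1 ≤ s ≤ q−1, and 0 ≤ j ≤ i. Then Σ_{a ∈ A_{i+}} ∂_θ^j(a)^s / a = ( (−1)^{s(i−j)} / L_i ) · e_{i−1,i−j}([1],[2],…,[i−1])^s in K = 𝔽_q(θ). -/
open Polynomial Finset

noncomputable section

variable (F : Type*) [Field F] [Fintype F]

local notation "q" => Fintype.card F

/-! Writing `a = θ^i + ∑_{t<i} c_t θ^t`, the sum runs over the affine space `θ^i + V` with
`V = span_𝔽_q (1, θ, …, θ^{i-1})`, and `∂_θ^j` is `𝔽_q`-linear. Summing out one coordinate at a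
time, Lagrange interpolation at the nodes `𝔽_q` (`∑_{a ∈ 𝔽_q} g(a)/(z - a) = -g(z)/(z^q - z)` for
`deg g < q`) gives, for `s < q`, linearly independent `u` and `w ∉ span u`,
`∑_c (x + ∑ c_t y_t)^s / (w + ∑ c_t u_t) = (x - P(w))^s / E(w)`, where `E` is the subspace
polynomial of `span u` normalised to have linear coefficient `1` and `P` is the `𝔽_q`-linear
`q`-polynomial of `q`-degree `< dim V` with `P(u_t) = y_t`.

Both are combinations of Frobenius powers, `E(z) = z + ∑_{k=1}^{i} η_k z^{q^k}` and
`P(z) = ∑_{k<i} π_k z^{q^k}`, and for `f(z) = ∑_k η_k z^{q^k}` and `M ∈ K[X]` one has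
`∑_t M_t f(θ^t) = ∑_k η_k M(θ^{q^k})`. For the monic `M = ∏_{k=1}^{i} (X - θ^{q^k})`, as `E`
vanishes at `θ^t` for `t < i`, this gives `E(θ^i) = M(θ) = L_i`. For
`N = ∏_{k=0}^{i-1} (X - θ^{q^k})`, as `P(θ^t) = ∂^j(θ^t)` for `t < i`, it gives
`∂^j(θ^i) - P(θ^i) = (∂^j N)(θ)`, the `j`-th Taylor coefficient at `θ` of `N`, which is
`X ∏_{k=1}^{i-1} (X - [k])`. -/

section PolynomialIdentities

theorem taylor_nodal {K ι : Type*} [CommRing K] (r : K) (s : Finset ι) (v : ι → K) :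
    taylor r (Lagrange.nodal s v) = Lagrange.nodal s fun k => v k - r := by
  simp only [Lagrange.nodal_eq, taylor_apply, Polynomial.prod_comp, sub_comp, X_comp, C_comp,
    map_sub]
  exact prod_congr rfl fun k _ => by ring

theorem coeff_nodal {K ι : Type*} [CommRing K] [DecidableEq ι] (s : Finset ι) (v : ι → K) {k : ℕ}
    (hk : k ≤ #s) : (Lagrange.nodal s v).coeff k = (-1) ^ (#s - k) * esymF s v (#s - k) := by
  have h := Multiset.prod_X_sub_C_coeff (s.val.map v) (k := k) (by simpa using hk)
  rw [Multiset.map_map, Multiset.card_map] at h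
  rw [Lagrange.nodal_eq, Finset.prod_eq_multiset_prod, esymF, ← Finset.esymm_map_val]
  exact h

theorem coeff_X_mul_nodal_Icc {K : Type*} [CommRing K] (v : ℕ → K) {i j : ℕ} (hi : 1 ≤ i)
    (hj : j ≤ i) :
    (X * Lagrange.nodal (Icc 1 (i - 1)) v).coeff j
      = (-1) ^ (i - j) * esymF (Icc 1 (i - 1)) v (i - j) := by
  have hcard : #(Icc 1 (i - 1)) = i - 1 := by simp
  cases j with
  | zero =>
    rw [mul_coeff_zero, coeff_X_zero, zero_mul, esymF,
      powersetCard_eq_empty.2 (by omega), sum_empty, mul_zero]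
  | succ j =>
    rw [coeff_X_mul, coeff_nodal _ _ (by omega), hcard, show i - 1 - j = i - (j + 1) by omega]

theorem sum_coeff_mul_coeff_taylor_X_pow {K : Type*} [CommRing K] {N : K[X]} {n : ℕ}
    (hn : N.natDegree < n) (r : K) (j : ℕ) :
    ∑ t ∈ range n, N.coeff t * (taylor r (X ^ t)).coeff j = (taylor r N).coeff j := by
  conv_rhs => rw [as_sum_range' N n hn]
  simp [taylor_monomial, coeff_C_mul]

theorem sub_inv_pow_mul_pow_eq {K : Type*} [Field K] {n : ℕ} (hn : n ≠ 0) {U : K} (hU : U ≠ 0)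
    (W : K) : W - (U ^ (n - 1))⁻¹ * W ^ n = U * (W / U - (W / U) ^ n) := by
  rw [div_pow, ← pow_sub_one_mul hn U]
  field_simp

end PolynomialIdentities

section OneVariable

variable {F} {L : Type*} [Field L] [Algebra F L]

theorem prod_X_sub_C_univ : ∏ a : F, (X - C a) = (X ^ q - X : F[X]) := by
  have hdeg : (X ^ q - X : F[X]).natDegree = q :=
    FiniteField.X_pow_card_sub_X_natDegree_eq F Fintype.one_lt_card
  have hmonic : (X ^ q - X : F[X]).Monic :=
    monic_X_pow_sub (by rw [degree_X]; exact_mod_cast Fintype.one_lt_card)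
  have h := prod_multiset_X_sub_C_of_monic_of_roots_card_eq hmonic
    (by rw [FiniteField.roots_X_pow_card_sub_X, hdeg]; rfl)
  rwa [FiniteField.roots_X_pow_card_sub_X] at h

theorem nodal_univ_algebraMap : Lagrange.nodal univ (algebraMap F L) = X ^ q - X := by
  rw [Lagrange.nodal_eq]
  simpa [Polynomial.map_prod] using congrArg (Polynomial.map (algebraMap F L)) prod_X_sub_C_univ

theorem prod_sub_algebraMap (z : L) : ∏ a : F, (z - algebraMap F L a) = z ^ q - z := by
  simpa [Lagrange.eval_nodal] using congrArg (eval z) (nodal_univ_algebraMap (F := F) (L := L))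

theorem natCast_card_eq_zero : (q : L) = 0 := by
  rw [← map_natCast (algebraMap F L), FiniteField.cast_card_eq_zero, map_zero]

theorem sum_eval_div_sub_algebraMap {g : L[X]} (hg : g.degree < q) {z : L}
    (hz : ∀ a : F, z ≠ algebraMap F L a) :
    ∑ a : F, g.eval (algebraMap F L a) / (z - algebraMap F L a) = -g.eval z / (z ^ q - z) := by
  classical
  have hinj : Set.InjOn (algebraMap F L) (univ : Finset F) :=
    (FaithfulSMul.algebraMap_injective F L).injOn
  have hweight (a : F) : Lagrange.nodalWeight univ (algebraMap F L) a = -1 := by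
    rw [Lagrange.nodalWeight_eq_eval_derivative_nodal (mem_univ a), nodal_univ_algebraMap,
      derivative_sub, derivative_X_pow, derivative_X, natCast_card_eq_zero]
    simp
  have hzq : z ^ q - z ≠ 0 := by
    rw [← prod_sub_algebraMap]
    exact prod_ne_zero_iff.2 fun a _ => sub_ne_zero.2 (hz a)
  have h := Lagrange.eval_interpolate_not_at_node (fun a => g.eval (algebraMap F L a))
    (fun a _ => hz a) (s := univ)
  rw [← Lagrange.eq_interpolate hinj (by simpa using hg), Lagrange.eval_nodal,
    prod_sub_algebraMap] at h
  simp only [hweight] at h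
  rw [h, ← mul_neg, mul_div_cancel_left₀ _ hzq, ← sum_neg_distrib]
  exact sum_congr rfl fun a _ => by ring

omit [Fintype F] in
theorem div_ne_algebraMap {U W : L} (hU : U ≠ 0) (hW : ∀ a : F, W + a • U ≠ 0) (a : F) :
    W / U ≠ algebraMap F L a := by
  rw [Ne, div_eq_iff hU, ← Algebra.smul_def, ← sub_eq_zero, sub_eq_add_neg, ← neg_smul]
  exact hW (-a)

theorem sub_inv_pow_mul_pow_card_ne_zero {U W : L} (hU : U ≠ 0)
    (hW : ∀ a : F, W + a • U ≠ 0) : W - (U ^ (q - 1))⁻¹ * W ^ q ≠ 0 := by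
  rw [sub_inv_pow_mul_pow_eq Fintype.card_ne_zero hU, ← neg_sub, mul_neg, neg_ne_zero,
    ← prod_sub_algebraMap]
  exact mul_ne_zero hU (prod_ne_zero_iff.2 fun a _ => sub_ne_zero.2 (div_ne_algebraMap hU hW a))

theorem sum_pow_div_add_smul {s : ℕ} (hs : s < q) {U : L} (hU : U ≠ 0) {W : L}
    (hW : ∀ a : F, W + a • U ≠ 0) (X' Y : L) :
    ∑ a : F, (X' + a • Y) ^ s / (W + a • U)
      = (X' - W / U * Y) ^ s / (W - (U ^ (q - 1))⁻¹ * W ^ q) := by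
  set g : L[X] := (C X' - C Y * X) ^ s
  have hg : g.degree < q := by
    refine (degree_le_of_natDegree_le (natDegree_pow_le_of_le s (m := 1) ?_)).trans_lt
      (by rw [mul_one]; exact_mod_cast hs)
    compute_degree!
  have hgz : g.eval (W / U) = (X' - W / U * Y) ^ s := by
    simp only [g, eval_pow, eval_sub, eval_C, eval_mul, eval_X, mul_comm Y]
  have hterm (a : F) : (X' + (-a) • Y) ^ s / (W + (-a) • U)
      = U⁻¹ * (g.eval (algebraMap F L a) / (W / U - algebraMap F L a)) := by
    simp only [g, eval_pow, eval_sub, eval_C, eval_mul, eval_X, map_neg, Algebra.smul_def]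
    field_simp
    ring
  rw [← Equiv.sum_comp (Equiv.neg F)]
  simp only [Equiv.neg_apply, hterm, ← mul_sum, hgz,
    sum_eval_div_sub_algebraMap hg (div_ne_algebraMap hU hW),
    sub_inv_pow_mul_pow_eq Fintype.card_ne_zero hU]
  rw [← neg_sub (W / U), neg_div_neg_eq, div_mul_eq_div_div_swap, inv_mul_eq_div]

end OneVariable

section SubspacePolynomials

open FiniteField

variable {F} {L : Type*} [Field L] [Algebra F L]

variable (F) in
/-- For linearly independent `u` with span `V`, this is
`z ↦ ∏_{v ∈ V} (z - v) / ∏_{v ∈ V, v ≠ 0} (-v)`, the subspace polynomial of `V` normalised to have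
linear coefficient `1`. -/
def subspacePoly : {d : ℕ} → (Fin d → L) → Module.End F L
  | 0, _ => 1
  | _ + 1, u =>
    let E := subspacePoly (Fin.tail u)
    E - (E (u 0) ^ (q - 1))⁻¹ • ((frobeniusAlgHom F L).toLinearMap * E)

variable (F) in
/-- Newton interpolation: for linearly independent `u`, the `F`-linear `q`-polynomial of
`q`-degree `< d` sending `u t` to `y t`. -/
def interpPoly : {d : ℕ} → (Fin d → L) → (Fin d → L) → Module.End F L
  | 0, _, _ => 0
  | _ + 1, u, y =>
    let P := interpPoly (Fin.tail u) (Fin.tail y)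
    let E := subspacePoly F (Fin.tail u)
    P + ((y 0 - P (u 0)) / E (u 0)) • E

theorem subspacePoly_succ_apply {d : ℕ} (u : Fin (d + 1) → L) (z : L) :
    subspacePoly F u z = subspacePoly F (Fin.tail u) z
      - (subspacePoly F (Fin.tail u) (u 0) ^ (q - 1))⁻¹ * subspacePoly F (Fin.tail u) z ^ q :=
  rfl

theorem interpPoly_succ_apply {d : ℕ} (u y : Fin (d + 1) → L) (z : L) :
    interpPoly F u y z = interpPoly F (Fin.tail u) (Fin.tail y) z
      + (y 0 - interpPoly F (Fin.tail u) (Fin.tail y) (u 0)) / subspacePoly F (Fin.tail u) (u 0)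
        * subspacePoly F (Fin.tail u) z :=
  rfl

theorem subspacePoly_apply_self {d : ℕ} (u : Fin d → L) (t : Fin d) :
    subspacePoly F u (u t) = 0 := by
  induction d with
  | zero => exact t.elim0
  | succ d ih =>
    rw [subspacePoly_succ_apply]
    cases t using Fin.cases with
    | zero =>
      rcases eq_or_ne (subspacePoly F (Fin.tail u) (u 0)) 0 with h | h
      · simp [h]
      · rw [← pow_sub_one_mul Fintype.card_ne_zero, inv_mul_cancel_left₀ (pow_ne_zero _ h),
          sub_self]
    | succ t =>
      rw [show u t.succ = Fin.tail u t from rfl, ih, zero_pow Fintype.card_ne_zero, mul_zero,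
        sub_zero]

omit [Fintype F] in
theorem LinearIndependent.fin_tail_and_notMem_span {d : ℕ} {u : Fin (d + 1) → L}
    (hu : LinearIndependent F u) :
    LinearIndependent F (Fin.tail u) ∧ u 0 ∉ Submodule.span F (Set.range (Fin.tail u)) :=
  linearIndependent_finCons.1 (by rwa [Fin.cons_self_tail])

omit [Fintype F] in
theorem add_smul_notMem_span_tail {d : ℕ} {u : Fin (d + 1) → L} {w : L}
    (hw : w ∉ Submodule.span F (Set.range u)) (a : F) :
    w + a • u 0 ∉ Submodule.span F (Set.range (Fin.tail u)) := by
  intro h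
  apply hw
  rw [Fin.range_fin_succ, Submodule.mem_span_insert]
  exact ⟨-a, _, h, by rw [neg_smul]; abel⟩

theorem subspacePoly_ne_zero {d : ℕ} {u : Fin d → L} (hu : LinearIndependent F u) {w : L}
    (hw : w ∉ Submodule.span F (Set.range u)) : subspacePoly F u w ≠ 0 := by
  induction d generalizing w with
  | zero => simpa [subspacePoly] using hw
  | succ d ih =>
    obtain ⟨hu', hu0⟩ := hu.fin_tail_and_notMem_span
    rw [subspacePoly_succ_apply]
    refine sub_inv_pow_mul_pow_card_ne_zero (ih hu' hu0) fun a => ?_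
    rw [← map_smul, ← map_add]
    exact ih hu' (add_smul_notMem_span_tail hw a)

theorem interpPoly_apply_self {d : ℕ} {u : Fin d → L} (hu : LinearIndependent F u)
    (y : Fin d → L) (t : Fin d) : interpPoly F u y (u t) = y t := by
  induction d with
  | zero => exact t.elim0
  | succ d ih =>
    obtain ⟨hu', hu0⟩ := hu.fin_tail_and_notMem_span
    rw [interpPoly_succ_apply]
    cases t using Fin.cases with
    | zero => rw [div_mul_cancel₀ _ (subspacePoly_ne_zero hu' hu0), add_sub_cancel]
    | succ t =>
      rw [show u t.succ = Fin.tail u t from rfl, subspacePoly_apply_self, mul_zero, add_zero,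
        ih hu']
      rfl

theorem sum_pow_div_add_sum_smul {s : ℕ} (hs : s < q) {d : ℕ} {u : Fin d → L}
    (hu : LinearIndependent F u) {w : L} (hw : w ∉ Submodule.span F (Set.range u))
    (x : L) (y : Fin d → L) :
    ∑ c : Fin d → F, (x + ∑ t, c t • y t) ^ s / (w + ∑ t, c t • u t)
      = (x - interpPoly F u y w) ^ s / subspacePoly F u w := by
  induction d generalizing w x with
  | zero => simp [subspacePoly, interpPoly]
  | succ d ih =>
    obtain ⟨hu', hu0⟩ := hu.fin_tail_and_notMem_span
    set E := subspacePoly F (Fin.tail u)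
    set P := interpPoly F (Fin.tail u) (Fin.tail y)
    have hE : ∀ a : F, E w + a • E (u 0) ≠ 0 := fun a => by
      rw [← map_smul, ← map_add]
      exact subspacePoly_ne_zero hu' (add_smul_notMem_span_tail hw a)
    have hfiber (a : F) :
        ∑ c : Fin d → F, (x + ∑ t, (Fin.cons a c : Fin (d + 1) → F) t • y t) ^ s
            / (w + ∑ t, (Fin.cons a c : Fin (d + 1) → F) t • u t)
          = ((x - P w) + a • (y 0 - P (u 0))) ^ s / (E w + a • E (u 0)) := by
      simp only [Fin.sum_univ_succ, Fin.cons_zero, Fin.cons_succ, ← add_assoc]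
      refine (ih hu' (add_smul_notMem_span_tail hw a) (x + a • y 0) (Fin.tail y)).trans ?_
      rw [map_add, map_smul, map_add, map_smul, smul_sub]
      congr 2
      abel
    rw [← (Fin.consEquiv fun _ => F).sum_comp, Fintype.sum_prod_type]
    simp only [Fin.consEquiv_apply, hfiber]
    rw [sum_pow_div_add_smul hs (subspacePoly_ne_zero hu' hu0) hE, interpPoly_succ_apply,
      subspacePoly_succ_apply]
    congr 2
    ring

variable (F L) in
def frobSpan (S : Set ℕ) : Submodule L (Module.End F L) :=
  Submodule.span L ((fun k => (frobeniusAlgHom F L).toLinearMap ^ k) '' S)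

theorem frobeniusAlgHom_pow_apply (k : ℕ) (z : L) :
    ((frobeniusAlgHom F L).toLinearMap ^ k) z = z ^ q ^ k := by
  induction k with
  | zero => simp
  | succ k ih => rw [pow_succ', Module.End.mul_apply, ih, pow_succ, pow_mul]; rfl

theorem frobSpan_mono {S T : Set ℕ} (h : S ⊆ T) : frobSpan F L S ≤ frobSpan F L T :=
  Submodule.span_mono (Set.image_mono h)

theorem frobeniusAlgHom_mul_mem_frobSpan {S : Set ℕ} {f : Module.End F L}
    (hf : f ∈ frobSpan F L S) :
    (frobeniusAlgHom F L).toLinearMap * f ∈ frobSpan F L ((· + 1) '' S) := by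
  induction hf using Submodule.span_induction with
  | mem f hf =>
    obtain ⟨k, hk, rfl⟩ := hf
    exact Submodule.subset_span ⟨k + 1, ⟨k, hk, rfl⟩, pow_succ' _ _⟩
  | zero => simp
  | add f g _ _ hf hg => rw [mul_add]; exact add_mem hf hg
  | smul c f _ hf =>
    have hsmul : (frobeniusAlgHom F L).toLinearMap * (c • f)
        = c ^ q • ((frobeniusAlgHom F L).toLinearMap * f) := by
      ext z
      simp [mul_pow]
    rw [hsmul]
    exact Submodule.smul_mem _ _ hf

theorem subspacePoly_sub_one_mem {d : ℕ} (u : Fin d → L) :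
    subspacePoly F u - 1 ∈ frobSpan F L (Set.Icc 1 d) := by
  induction d with
  | zero => simp [subspacePoly]
  | succ d ih =>
    set E := subspacePoly F (Fin.tail u)
    set φ := (frobeniusAlgHom F L).toLinearMap
    have hE : E - 1 ∈ frobSpan F L (Set.Icc 1 (d + 1)) :=
      frobSpan_mono (Set.Icc_subset_Icc_right d.le_succ) (ih _)
    have hφE : φ * (E - 1) ∈ frobSpan F L (Set.Icc 1 (d + 1)) := by
      refine frobSpan_mono ?_ (frobeniusAlgHom_mul_mem_frobSpan (ih _))
      rintro _ ⟨k, ⟨hk1, hk2⟩, rfl⟩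
      exact ⟨by simp, by simpa using hk2⟩
    have hφ : φ ∈ frobSpan F L (Set.Icc 1 (d + 1)) :=
      Submodule.subset_span ⟨1, ⟨le_rfl, by omega⟩, pow_one φ⟩
    have hsplit :
        subspacePoly F u - 1 = (E - 1) - (E (u 0) ^ (q - 1))⁻¹ • (φ * (E - 1) + φ) := by
      rw [mul_sub, mul_one, sub_add_cancel]
      exact sub_right_comm E ((E (u 0) ^ (q - 1))⁻¹ • (φ * E)) 1
    rw [hsplit]
    exact sub_mem hE (Submodule.smul_mem _ _ (add_mem hφE hφ))

theorem interpPoly_mem {d : ℕ} (u y : Fin d → L) :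
    interpPoly F u y ∈ frobSpan F L (Set.Iio d) := by
  induction d with
  | zero => exact zero_mem _
  | succ d ih =>
    have hE : subspacePoly F (Fin.tail u) ∈ frobSpan F L (Set.Iio (d + 1)) := by
      rw [← sub_add_cancel (subspacePoly F (Fin.tail u)) 1]
      refine add_mem (frobSpan_mono ?_ (subspacePoly_sub_one_mem _)) ?_
      · exact fun k hk => Set.mem_Iio.2 (Nat.lt_succ_of_le hk.2)
      · exact Submodule.subset_span ⟨0, Nat.succ_pos d, pow_zero _⟩
    exact add_mem (frobSpan_mono (Set.Iio_subset_Iio d.le_succ) (ih _ _))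
      (Submodule.smul_mem _ _ hE)

theorem sum_coeff_mul_apply_eq_zero {S : Set ℕ} {f : Module.End F L} (hf : f ∈ frobSpan F L S)
    {M : L[X]} {n : ℕ} (hn : M.natDegree < n) {θ : L}
    (hM : ∀ k ∈ S, M.eval (θ ^ q ^ k) = 0) :
    ∑ t ∈ range n, M.coeff t * f (θ ^ t) = 0 := by
  induction hf using Submodule.span_induction with
  | mem f hf =>
    obtain ⟨k, hk, rfl⟩ := hf
    simp_rw [frobeniusAlgHom_pow_apply, pow_right_comm θ _ (q ^ k)]
    rw [← eval_eq_sum_range' hn, hM k hk]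
  | zero => simp
  | add f g _ _ hf hg => simp [mul_add, sum_add_distrib, hf, hg]
  | smul c f _ hf => simp [mul_left_comm _ c, ← mul_sum, hf]

end SubspacePolynomials

section RationalFunctions

variable {F}

theorem finsum_monic_natDegree_eq {M : Type*} [AddCommMonoid M] (i : ℕ) (f : F[X] → M) :
    ∑ᶠ a ∈ {a : F[X] | a.Monic ∧ a.natDegree = i}, f a
      = ∑ c : Fin i → F, f (X ^ i + ∑ t, c t • X ^ (t : ℕ)) := by
  let e := (monicEquivDegreeLT i).trans (degreeLTEquiv F i).toEquiv
  calc ∑ᶠ a ∈ {a : F[X] | a.Monic ∧ a.natDegree = i}, f a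
      = ∑ᶠ a : {a : F[X] // a.Monic ∧ a.natDegree = i}, f a :=
        (finsum_set_coe_eq_finsum_mem _).symm
    _ = ∑ c : Fin i → F, f (e.symm c) := by
        rw [← finsum_comp_equiv e.symm, finsum_eq_sum_of_fintype]
    _ = _ := by simp [e, monicEquivDegreeLT, degreeLTEquiv, smul_X_eq_monomial]

omit [Fintype F] in
theorem linearIndependent_θK_pow_and_notMem_span (i : ℕ) :
    LinearIndependent F (fun t : Fin i => θK F ^ (t : ℕ))
      ∧ θK F ^ i ∉ Submodule.span F (Set.range fun t : Fin i => θK F ^ (t : ℕ)) := by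
  have h := ((basisMonomials F).linearIndependent.comp _ (Fin.val_injective (n := i + 1))).map'
    ((IsScalarTower.toAlgHom F F[X] (RatFunc F)).toLinearMap)
    (LinearMap.ker_eq_bot.2 (RatFunc.algebraMap_injective F))
  simp only [coe_basisMonomials, Function.comp_def, AlgHom.toLinearMap_apply,
    IsScalarTower.coe_toAlgHom', monomial_one_right_eq_X_pow, map_pow] at h
  change LinearIndependent F fun t : Fin (i + 1) => θK F ^ (t : ℕ) at h
  rw [← Fin.snoc_init_self (fun t : Fin (i + 1) => θK F ^ (t : ℕ))] at h
  exact linearIndependent_finSnoc.1 h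

theorem subspacePoly_θK_pow (i : ℕ) :
    subspacePoly F (fun t : Fin i => θK F ^ (t : ℕ)) (θK F ^ i)
      = algebraMap F[X] (RatFunc F) (Lp F i) := by
  let u := fun t : Fin i => θK F ^ (t : ℕ)
  let M := Lagrange.nodal (Icc 1 i) fun k => θK F ^ q ^ k
  have hM : M.natDegree = i := by rw [Lagrange.natDegree_nodal, Nat.card_Icc, Nat.add_sub_cancel]
  have hMi : M.coeff i = 1 := by rw [← hM]; exact Lagrange.nodal_monic.coeff_natDegree
  have hvanish := sum_coeff_mul_apply_eq_zero (subspacePoly_sub_one_mem u) (M := M) (n := i + 1)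
    (by omega) (θ := θK F)
    (fun k hk => Lagrange.eval_nodal_at_node (v := fun k => θK F ^ q ^ k) (by simpa using hk))
  have hE : ∑ t ∈ range (i + 1), M.coeff t * subspacePoly F u (θK F ^ t)
      = subspacePoly F u (θK F ^ i) := by
    rw [sum_range_succ, hMi, one_mul, add_eq_right]
    exact sum_eq_zero fun t ht =>
      mul_eq_zero_of_right _ (subspacePoly_apply_self u ⟨t, by simpa using ht⟩)
  have hM_eval : M.eval (θK F) = algebraMap F[X] (RatFunc F) (Lp F i) := by
    simp only [M, Lagrange.eval_nodal, Lp, map_mul, map_pow, map_neg, map_one, map_prod, map_sub]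
    calc ∏ k ∈ Icc 1 i, (θK F - θK F ^ q ^ k) = ∏ k ∈ Icc 1 i, -(θK F ^ q ^ k - θK F) := by
          simp_rw [neg_sub]
      _ = _ := by rw [prod_neg, Nat.card_Icc, Nat.add_sub_cancel]; rfl
  simp only [LinearMap.sub_apply, Module.End.one_apply, mul_sub, sum_sub_distrib, hE,
    ← eval_eq_sum_range' (n := i + 1) (by omega : M.natDegree < i + 1), sub_eq_zero] at hvanish
  rw [hvanish, hM_eval]

omit [Fintype F] in
theorem algebraMap_hasseDeriv_X_pow (j t : ℕ) :
    algebraMap F[X] (RatFunc F) (hasseDeriv j (X ^ t)) = (taylor (θK F) (X ^ t)).coeff j := by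
  rw [taylor_X_pow, coeff_X_add_C_pow, ← monomial_one_right_eq_X_pow, hasseDeriv_monomial,
    mul_one, ← C_mul_X_pow_eq_monomial, map_mul, map_pow, C_eq_natCast, map_natCast, mul_comm]
  rfl

theorem taylor_nodal_θK_pow {i : ℕ} (hi : 1 ≤ i) :
    taylor (θK F) (Lagrange.nodal (range i) fun k => θK F ^ q ^ k)
      = X * Lagrange.nodal (Icc 1 (i - 1)) fun n => θK F ^ q ^ n - θK F := by
  obtain ⟨i, rfl⟩ : ∃ i', i = i' + 1 := ⟨i - 1, by omega⟩
  rw [taylor_nodal, Lagrange.nodal_eq, prod_range_succ', Lagrange.nodal_eq, Nat.add_sub_cancel,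
    ← Finset.Ico_add_one_right_eq_Icc, prod_Ico_eq_prod_range, Nat.add_sub_cancel, mul_comm]
  simp [add_comm 1]

theorem algebraMap_hasseDeriv_sub_interpPoly {i j : ℕ} (hi : 1 ≤ i) (hj : j ≤ i) :
    algebraMap F[X] (RatFunc F) (hasseDeriv j (X ^ i))
      - interpPoly F (fun t : Fin i => θK F ^ (t : ℕ))
          (fun t => algebraMap F[X] (RatFunc F) (hasseDeriv j (X ^ (t : ℕ)))) (θK F ^ i)
      = (-1) ^ (i - j) * esymF (Icc 1 (i - 1)) (fun n => θK F ^ q ^ n - θK F) (i - j) := by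
  let u := fun t : Fin i => θK F ^ (t : ℕ)
  let y := fun t : ℕ => algebraMap F[X] (RatFunc F) (hasseDeriv j (X ^ t))
  let P := interpPoly F u fun t => y t
  let N := Lagrange.nodal (range i) fun k => θK F ^ q ^ k
  have hN : N.natDegree = i := by rw [Lagrange.natDegree_nodal, card_range]
  have hNi : N.coeff i = 1 := by rw [← hN]; exact Lagrange.nodal_monic.coeff_natDegree
  have hvanish := sum_coeff_mul_apply_eq_zero (interpPoly_mem u fun t => y t) (M := N) (n := i + 1)
    (by omega) (θ := θK F)
    (fun k hk => Lagrange.eval_nodal_at_node (v := fun k => θK F ^ q ^ k) (by simpa using hk))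
  have hu : LinearIndependent F u := (linearIndependent_θK_pow_and_notMem_span i).1
  have hP : ∑ t ∈ range (i + 1), N.coeff t * P (θK F ^ t)
      = ∑ t ∈ range i, N.coeff t * y t + P (θK F ^ i) := by
    rw [sum_range_succ, hNi, one_mul]
    congr 1
    exact sum_congr rfl fun t ht => by
      rw [show θK F ^ t = u ⟨t, mem_range.1 ht⟩ from rfl, interpPoly_apply_self hu]
  have hy : ∑ t ∈ range (i + 1), N.coeff t * y t = (taylor (θK F) N).coeff j := by
    simp only [y, algebraMap_hasseDeriv_X_pow]
    exact sum_coeff_mul_coeff_taylor_X_pow (by omega) _ _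
  rw [hP] at hvanish
  have hcoeff : (taylor (θK F) N).coeff j = y i - P (θK F ^ i) := by
    rw [← hy, sum_range_succ, hNi, one_mul]
    linear_combination hvanish
  change y i - P (θK F ^ i) = _
  rw [← hcoeff, taylor_nodal_θK_pow hi, coeff_X_mul_nodal_Icc _ hi hj]

end RationalFunctions

theorem stmt10 (i : ℕ) (hi : 1 ≤ i) (s : ℕ) (hs2 : s ≤ q - 1)
    (j : ℕ) (hj : j ≤ i) :
    (∑ᶠ a ∈ {a : Polynomial F | a.Monic ∧ a.natDegree = i},
        algebraMap (Polynomial F) (RatFunc F) (hasseDeriv j a) ^ s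
          / algebraMap (Polynomial F) (RatFunc F) a)
      = ((-1 : RatFunc F) ^ (s * (i - j))
            / algebraMap (Polynomial F) (RatFunc F) (Lp F i))
          * esymF (Icc 1 (i - 1)) (fun n => θK F ^ q ^ n - θK F) (i - j) ^ s := by
  have hs : s < q := by have := Fintype.card_pos (α := F); omega
  obtain ⟨hu, hw⟩ := linearIndependent_θK_pow_and_notMem_span (F := F) i
  have hsmul (c : F) (p : F[X]) :
      algebraMap F[X] (RatFunc F) (c • p) = c • algebraMap F[X] (RatFunc F) p :=
    map_smul (IsScalarTower.toAlgHom F F[X] (RatFunc F)) c p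
  have hX (n : ℕ) : algebraMap F[X] (RatFunc F) (X ^ n) = θK F ^ n := map_pow _ _ _
  rw [finsum_monic_natDegree_eq]
  simp only [map_add, map_sum, map_smul, hsmul, hX]
  rw [sum_pow_div_add_sum_smul hs hu hw, algebraMap_hasseDeriv_sub_interpPoly hi hj,
    subspacePoly_θK_pow]
  ring

end
end
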